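/- arXiv:1006.5427 — 4 statements merged into one kernel-verified Lean document; each statement's English description precedes it below -/
import Mathlib

section
/- Let g : ℤ → ℤ satisfy a linear recurrence g(r) = Σ_{i=1}^{d} c_i · g(r−i) with integer coefficients c_1,…,c_d where c_d = 1 (or c_d = −1, i.e. c_d is a unit). If g(0) = 0, then for every positive integer m there exists an index r₀ > 0 such that g(r₀) ≡ 0 (mod m). -/
/-- Backwards step: if two windows of length `d` agree mod `m`, so do the
windows shifted one step to the left. -/
lemma step_aux (d : ℕ) (hd : 1 ≤ d) (c : ℕ → ℤ) (hc : c d = 1 ∨ c d = -1)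
    (g : ℤ → ℤ)
    (hrec : ∀ r : ℤ, g r = ∑ i ∈ Finset.Icc 1 d, c i * g (r - (i : ℤ)))
    (m : ℤ) (a b : ℤ)
    (h : ∀ i : ℕ, i < d → m ∣ g (a + i) - g (b + i)) :
    ∀ i : ℕ, i < d → m ∣ g (a - 1 + i) - g (b - 1 + i) := by
  obtain ⟨e, rfl⟩ : ∃ e, d = e + 1 := ⟨d - 1, by omega⟩
  have key : m ∣ c (e + 1) * (g (a - 1) - g (b - 1)) := by
    have ha := hrec (a + e)
    have hb := hrec (b + e)
    rw [Finset.sum_Icc_succ_top (by omega)] at ha hb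
    have h1 : a + (e : ℤ) - ((e : ℤ) + 1) = a - 1 := by ring
    have h2 : b + (e : ℤ) - ((e : ℤ) + 1) = b - 1 := by ring
    push_cast at ha hb
    rw [h1] at ha
    rw [h2] at hb
    have hsum : m ∣ ∑ i ∈ Finset.Icc 1 e,
        c i * (g (a + e - (i : ℤ)) - g (b + e - (i : ℤ))) := by
      apply Finset.dvd_sum
      intro i hi
      simp only [Finset.mem_Icc] at hi
      have h3 := h (e - i) (by omega)
      have e1 : a + ((e - i : ℕ) : ℤ) = a + e - i := by
        have : ((e - i : ℕ) : ℤ) = (e : ℤ) - i := by omega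
        rw [this]; ring
      have e2 : b + ((e - i : ℕ) : ℤ) = b + e - i := by
        have : ((e - i : ℕ) : ℤ) = (e : ℤ) - i := by omega
        rw [this]; ring
      rw [e1, e2] at h3
      exact Dvd.dvd.mul_left h3 (c i)
    have hee := h e (by omega)
    have expand : c (e + 1) * (g (a - 1) - g (b - 1)) =
        (g (a + e) - g (b + e)) - ∑ i ∈ Finset.Icc 1 e,
          c i * (g (a + e - (i : ℤ)) - g (b + e - (i : ℤ))) := by
      rw [ha, hb]
      simp only [mul_sub, Finset.sum_sub_distrib]
      ring
    rw [expand]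
    exact dvd_sub hee hsum
  intro i hi
  match i with
  | 0 =>
    have : m ∣ g (a - 1) - g (b - 1) := by
      rcases hc with h1 | h1
      · simpa [h1] using key
      · rw [h1] at key
        simpa using (dvd_neg.mpr key : m ∣ -(-1 * (g (a - 1) - g (b - 1))))
    simpa using this
  | n + 1 =>
    have e1 : a - 1 + ((n + 1 : ℕ) : ℤ) = a + n := by push_cast; ring
    have e2 : b - 1 + ((n + 1 : ℕ) : ℤ) = b + n := by push_cast; ring
    rw [e1, e2]
    exact h n (by omega)

/-- Claim 2.4 of the paper (two-sided version): if `g : ℤ → ℤ` satisfies a linear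
recurrence with integer coefficients whose trailing coefficient `c d` is a unit
(`1` or `-1`), and `g 0 = 0`, then for every positive integer `m` there is a
positive index `r₀` with `g r₀ ≡ 0 (mod m)`. -/
theorem exists_pos_index_dvd (d : ℕ) (hd : 1 ≤ d) (c : ℕ → ℤ)
    (hc : c d = 1 ∨ c d = -1) (g : ℤ → ℤ)
    (hrec : ∀ r : ℤ, g r = ∑ i ∈ Finset.Icc 1 d, c i * g (r - (i : ℤ)))
    (h0 : g 0 = 0) :
    ∀ m : ℕ, 0 < m → ∃ r₀ : ℤ, 0 < r₀ ∧ (m : ℤ) ∣ g r₀ := by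
  intro m hm
  haveI : NeZero m := ⟨hm.ne'⟩
  -- pigeonhole on the window of length d mod m
  set f : ℕ → (Fin d → ZMod m) := fun n i => ((g ((n : ℤ) + (i : ℤ))) : ZMod m) with hf
  obtain ⟨a, b, hab, hfe⟩ : ∃ a b : ℕ, a < b ∧ f a = f b := by
    obtain ⟨a, b, hne, hfe⟩ := Finite.exists_ne_map_eq_of_infinite f
    rcases hne.lt_or_gt with h | h
    · exact ⟨a, b, h, hfe⟩
    · exact ⟨b, a, h, hfe.symm⟩
  have base : ∀ i : ℕ, i < d → (m : ℤ) ∣ g ((a : ℤ) + i) - g ((b : ℤ) + i) := by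
    intro i hi
    have := congrFun hfe ⟨i, hi⟩
    simp only [hf] at this
    have hmod := (ZMod.intCast_eq_intCast_iff _ _ _).mp this
    have := (Int.ModEq.dvd hmod)
    exact (dvd_sub_comm).mp this
  have key : ∀ n : ℕ, ∀ i : ℕ, i < d →
      (m : ℤ) ∣ g ((a : ℤ) - n + i) - g ((b : ℤ) - n + i) := by
    intro n
    induction n with
    | zero => simpa using base
    | succ k ih =>
      have := step_aux d hd c hc g hrec (m : ℤ) ((a : ℤ) - k) ((b : ℤ) - k) ih
      intro i hi
      have e1 : (a : ℤ) - k - 1 + i = (a : ℤ) - (k + 1 : ℕ) + i := by push_cast; ring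
      have e2 : (b : ℤ) - k - 1 + i = (b : ℤ) - (k + 1 : ℕ) + i := by push_cast; ring
      rw [← e1, ← e2]
      exact this i hi
  have final := key a 0 (by omega)
  have e1 : (a : ℤ) - a + (0 : ℕ) = 0 := by push_cast; ring
  have e2 : (b : ℤ) - a + (0 : ℕ) = (b : ℤ) - a := by push_cast; ring
  rw [e1, e2, h0] at final
  refine ⟨(b : ℤ) - a, by omega, ?_⟩
  simpa using final.neg_left
end

section
/- Define g : ℕ → ℕ by g(r) = 1 for 0 ≤ r < d, g(d) = 2, and g(r) = g(r−1) + g(r−d) for r > d (where d ≥ 2 is fixed). Then for every positive integer m there exists r₀ > 0 with m ∣ g(r₀). -/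
/-- The counting sequence of `F`-matchings in the trees `Y_r` of the paper:
`g r = 1` for `r < d`, `g d = 2`, and `g r = g (r-1) + g (r-d)` for `r > d`.
For every positive integer `m` some value at a positive index is divisible by `m`. -/
theorem exists_dvd_of_matching_recurrence (d : ℕ) (hd : 2 ≤ d) (g : ℕ → ℕ)
    (h1 : ∀ r : ℕ, r < d → g r = 1) (h2 : g d = 2)
    (hrec : ∀ r : ℕ, d < r → g r = g (r - 1) + g (r - d)) :
    ∀ m : ℕ, 0 < m → ∃ r₀ : ℕ, 0 < r₀ ∧ m ∣ g r₀ := by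
  intro m hm
  haveI : NeZero m := ⟨hm.ne'⟩
  -- The extended sequence mod m: zeros at the `d-1` "negative" positions.
  set G : ℕ → ZMod m := fun n => if n < d - 1 then 0 else (g (n - (d - 1)) : ZMod m)
    with hG
  have hGrec : ∀ n, d ≤ n → G n = G (n - 1) + G (n - d) := by
    intro n hn
    set k := n - (d - 1) with hk
    have hk1 : 1 ≤ k := by omega
    have hGn : G n = (g k : ZMod m) := by simp only [hG]; rw [if_neg (by omega)]
    have hGn1 : G (n - 1) = (g (k - 1) : ZMod m) := by
      simp only [hG]; rw [if_neg (by omega)]; congr 2; omega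
    rcases lt_trichotomy k d with h | h | h
    · have hz : G (n - d) = 0 := by simp only [hG]; rw [if_pos (by omega)]
      rw [hGn, hGn1, hz, h1 k h, h1 (k - 1) (by omega), add_zero]
    · have hz : G (n - d) = (g 0 : ZMod m) := by
        simp only [hG]; rw [if_neg (by omega)]; congr 2; omega
      rw [hGn, hGn1, hz, h, h2, h1 (d - 1) (by omega), h1 0 (by omega)]
      norm_num
    · have hz : G (n - d) = (g (k - d) : ZMod m) := by
        simp only [hG]; rw [if_neg (by omega)]; congr 2; omega
      rw [hGn, hGn1, hz, hrec k h]
      push_cast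
      ring
  -- Forward propagation: agreement on a window of length d propagates forward.
  have fwd : ∀ a b, (∀ t, t < d → G (a + t) = G (b + t)) → ∀ n, G (a + n) = G (b + n) := by
    intro a b h n
    induction n using Nat.strong_induction_on with
    | _ n ih =>
      by_cases hnd : n < d
      · exact h n hnd
      · have e1 : a + n - 1 = a + (n - 1) := by omega
        have e2 : a + n - d = a + (n - d) := by omega
        have e3 : b + n - 1 = b + (n - 1) := by omega
        have e4 : b + n - d = b + (n - d) := by omega
        rw [hGrec (a + n) (by omega), hGrec (b + n) (by omega), e1, e2, e3, e4,
          ih (n - 1) (by omega), ih (n - d) (by omega)]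
  -- Backward propagation: the recurrence is invertible.
  have bwd : ∀ a b, (∀ t, t < d → G (a + 1 + t) = G (b + 1 + t)) →
      ∀ t, t < d → G (a + t) = G (b + t) := by
    intro a b h t ht
    rcases Nat.eq_zero_or_pos t with h0 | h0
    · subst h0
      have ra := hGrec (a + d) (by omega)
      have rb := hGrec (b + d) (by omega)
      have eaa : a + d - d = a := by omega
      have ebb : b + d - d = b := by omega
      rw [eaa] at ra
      rw [ebb] at rb
      have ea : a + d = a + 1 + (d - 1) := by omega
      have eb : b + d = b + 1 + (d - 1) := by omega
      have ea1 : a + d - 1 = a + 1 + (d - 2) := by omega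
      have eb1 : b + d - 1 = b + 1 + (d - 2) := by omega
      have k1 : G (a + d) = G (b + d) := by rw [ea, eb]; exact h (d - 1) (by omega)
      have k2 : G (a + d - 1) = G (b + d - 1) := by rw [ea1, eb1]; exact h (d - 2) (by omega)
      have key : G (a + d - 1) + G a = G (a + d - 1) + G b := by
        rw [← ra, k1, rb, k2]
      simpa using add_left_cancel key
    · have e1 : a + t = a + 1 + (t - 1) := by omega
      have e2 : b + t = b + 1 + (t - 1) := by omega
      rw [e1, e2]
      exact h (t - 1) (by omega)
  -- Pigeonhole: two equal windows.
  obtain ⟨i, j, hlt, hsij⟩ : ∃ i j : ℕ, i < j ∧ ∀ t, t < d → G (i + t) = G (j + t) := by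
    obtain ⟨i, j, hne, he⟩ :=
      Finite.exists_ne_map_eq_of_infinite (fun n (t : Fin d) => G (n + t.val))
    rcases hne.lt_or_gt with h | h
    · exact ⟨i, j, h, fun t ht => congrFun he ⟨t, ht⟩⟩
    · exact ⟨j, i, h, fun t ht => congrFun he.symm ⟨t, ht⟩⟩
  set p := j - i with hp
  have hp1 : 1 ≤ p := by omega
  -- Walk back to 0: windows at 0 and p agree.
  have back : ∀ a, (∀ t, t < d → G (a + t) = G (a + p + t)) →
      ∀ t, t < d → G (0 + t) = G (p + t) := by
    intro a
    induction a with
    | zero => intro h t ht; simpa using h t ht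
    | succ a ih =>
      intro h
      apply ih
      apply bwd
      intro t ht
      have e : a + p + 1 = a + 1 + p := by omega
      rw [e]
      exact h t ht
  have h0 : ∀ t, t < d → G (0 + t) = G (p + t) := by
    apply back i
    intro t ht
    have e : i + p = j := by omega
    rw [e]
    exact hsij t ht
  -- Full periodicity forward.
  have hper : ∀ n, G (0 + n) = G (p + n) := fwd 0 p h0
  -- The zero at "position -1" recurs at index 2p + d - 2.
  have hz0 : G (d - 2) = 0 := by simp only [hG]; rw [if_pos (by omega)]
  have hz1 : G (p + (d - 2)) = 0 := by rw [← hper (d - 2)]; simpa using hz0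
  have hz2 : G (p + (p + (d - 2))) = 0 := by
    rw [← hper (p + (d - 2))]; simpa using hz1
  refine ⟨2 * p - 1, by omega, ?_⟩
  have hval : (g (2 * p - 1) : ZMod m) = 0 := by
    have hN : G (p + (p + (d - 2))) = (g (2 * p - 1) : ZMod m) := by
      simp only [hG]; rw [if_neg (by omega)]; congr 2; omega
    rw [← hN, hz2]
  exact (ZMod.natCast_eq_zero_iff _ m).mp hval
end

section
/- Define g' : ℕ → ℤ by g'(r) = g'(r−1) + g'(r−d−1) for all r ≥ d+1, with g'(r) = 1 for 1 ≤ r ≤ d−1 and arbitrary integer values g'(d), g'(d+1) satisfying g'(d−1) = g'(d−2) (i.e. the backward extension gives g'(−2) = g'(d−1) − g'(d−2) = 0). Then for every positive integer m there exists r₀ ≥ 1 with m ∣ g'(r₀). -/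
/-- The counting sequence of induced `F`-matchings in the trees `Y'_r` of the paper:
`g' r = 1` for `1 ≤ r ≤ d-1`, arbitrary values `g' d`, `g' (d+1)`, and
`g' r = g' (r-1) + g' (r-d-1)` for `r ≥ d+1`. For every positive integer `m`
some value at an index `r₀ ≥ 1` is divisible by `m`. -/
theorem exists_dvd_of_induced_matching_recurrence (d : ℕ) (hd : 3 ≤ d) (g' : ℕ → ℤ)
    (h1 : ∀ r : ℕ, 1 ≤ r → r ≤ d - 1 → g' r = 1)
    (hrec : ∀ r : ℕ, d + 1 ≤ r → g' r = g' (r - 1) + g' (r - d - 1)) :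
    ∀ m : ℕ, 0 < m → ∃ r₀ : ℕ, 1 ≤ r₀ ∧ (m : ℤ) ∣ g' r₀ := by
  intro m hm
  haveI : NeZero m := ⟨hm.ne'⟩
  set f : ℕ → ZMod m := fun r => ((g' r : ℤ) : ZMod m) with hf
  have hfrec : ∀ r : ℕ, f (r + d + 1) = f (r + d) + f r := by
    intro r
    have h := hrec (r + d + 1) (by omega)
    have e1 : r + d + 1 - 1 = r + d := by omega
    have e2 : r + d + 1 - d - 1 = r := by omega
    rw [e1, e2] at h
    simp only [hf, h, Int.cast_add]
  set S : ℕ → (Fin (d + 1) → ZMod m) := fun n i => f (n + 1 + i.val) with hS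
  have fwd : ∀ a b : ℕ, S a = S b → S (a + 1) = S (b + 1) := by
    intro a b h
    funext i
    rcases lt_or_ge i.val d with hi | hi
    · have := congrFun h ⟨i.val + 1, by omega⟩
      simpa [hS, Nat.add_assoc, Nat.add_comm, Nat.add_left_comm] using this
    · have hid : i.val = d := by omega
      have h0 := congrFun h ⟨0, by omega⟩
      have hd' := congrFun h ⟨d, by omega⟩
      simp only [hS] at h0 hd' ⊢
      have ea : a + 1 + 1 + i.val = (a + 1) + d + 1 := by omega
      have eb : b + 1 + 1 + i.val = (b + 1) + d + 1 := by omega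
      rw [ea, eb, hfrec (a + 1), hfrec (b + 1)]
      have ea2 : a + 1 + d = a + 1 + d := rfl
      have : f (a + 1 + d) = f (b + 1 + d) := by simpa using hd'
      rw [this]
      have : f (a + 1) = f (b + 1) := by simpa using h0
      rw [show (a+1)+d = a+1+d from rfl, show (b+1)+d = b+1+d from rfl] at *
      rw [this]
  have bwd : ∀ a b : ℕ, S (a + 1) = S (b + 1) → S a = S b := by
    intro a b h
    funext i
    rcases Nat.eq_zero_or_pos i.val with hi | hi
    · -- f (a+1) = f (a+d+2) - f (a+d+1)
      have hda := hfrec (a + 1)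
      have hdb := hfrec (b + 1)
      have hd1 := congrFun h ⟨d, by omega⟩
      have hd2 := congrFun h ⟨d - 1, by omega⟩
      simp only [hS] at hd1 hd2 ⊢
      rw [hi]
      have ea : a + 1 + 1 + d = a + 1 + d + 1 := by omega
      have eb : b + 1 + 1 + d = b + 1 + d + 1 := by omega
      rw [ea, eb, hda, hdb] at hd1
      have ea2 : a + 1 + 1 + (d - 1) = a + 1 + d := by omega
      have eb2 : b + 1 + 1 + (d - 1) = b + 1 + d := by omega
      rw [ea2, eb2] at hd2
      rw [hd2] at hd1
      have : f (a + 1) = f (b + 1) := by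
        have := add_left_cancel hd1
        exact this
      simpa using this
    · have := congrFun h ⟨i.val - 1, by omega⟩
      simp only [hS] at this ⊢
      have ea : a + 1 + 1 + (i.val - 1) = a + 1 + i.val := by omega
      have eb : b + 1 + 1 + (i.val - 1) = b + 1 + i.val := by omega
      rw [ea, eb] at this
      exact this
  obtain ⟨a, b, hab, hSab⟩ := Finite.exists_ne_map_eq_of_infinite S
  wlog hlt : a < b generalizing a b
  · exact this b a hab.symm hSab.symm (by omega)
  set p := b - a with hp
  have hp0 : 0 < p := by omega
  -- S n = S (n + p) for all n
  have base : S 0 = S p := by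
    have : ∀ k : ℕ, k ≤ a → S (a - k) = S (a - k + p) := by
      intro k
      induction k with
      | zero => intro _; simpa [hp, Nat.add_sub_cancel' hlt.le] using hSab
      | succ k ih =>
        intro hk
        have h' := ih (by omega)
        apply bwd
        have e1 : a - (k+1) + 1 = a - k := by omega
        have e2 : a - (k+1) + p + 1 = a - k + p := by omega
        rw [e1, e2]; exact h'
    have := this a le_rfl
    simpa using this
  have per : ∀ n : ℕ, S n = S (n + p) := by
    intro n
    induction n with
    | zero => simpa using base
    | succ n ih =>
      have := fwd n (n + p) ih
      simpa [Nat.add_right_comm] using this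
  have perk : ∀ k n : ℕ, S n = S (n + k * p) := by
    intro k
    induction k with
    | zero => intro n; simp
    | succ k ih =>
      intro n
      have h1 := ih n
      have h2 := per (n + k * p)
      rw [h1, h2, show n + k * p + p = n + (k + 1) * p by ring]
  have fper : ∀ k r : ℕ, 1 ≤ r → f r = f (r + k * p) := by
    intro k r hr
    have := congrFun (perk k (r - 1)) ⟨0, by omega⟩
    simp only [hS] at this
    have e1 : r - 1 + 1 + 0 = r := by omega
    have e2 : r - 1 + k * p + 1 + 0 = r + k * p := by omega
    rw [e1, e2] at this
    exact this
  -- choose K = (d+3) * p ≥ d+3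
  set K := (d + 3) * p with hK
  have hK3 : d + 3 ≤ K := Nat.le_mul_of_pos_right _ hp0
  refine ⟨K - 2, by omega, ?_⟩
  rw [← ZMod.intCast_zmod_eq_zero_iff_dvd]
  show f (K - 2) = 0
  have hrecK := hfrec (K - 2)
  have e1 : K - 2 + d + 1 = (d - 1) + (d + 3) * p := by omega
  have e2 : K - 2 + d = (d - 2) + (d + 3) * p := by omega
  rw [e1, e2] at hrecK
  rw [← fper (d + 3) (d - 1) (by omega), ← fper (d + 3) (d - 2) (by omega)] at hrecK
  have v1 : f (d - 1) = 1 := by simp [hf, h1 (d - 1) (by omega) (by omega)]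
  have v2 : f (d - 2) = 1 := by simp [hf, h1 (d - 2) (by omega) (by omega)]
  rw [v1, v2] at hrecK
  exact (left_eq_add.mp hrecK)
end

section
/- Let F be a tree with at least one edge and m a positive integer. Suppose Y is a tree with s(F,Y) ≡ 0 (mod m). Construct the rooted tree Z by taking Δ(F)+1 disjoint copies of Y, adding a new root r, and joining r by an edge to one vertex of each copy. If a tree T contains an edge {u,v} such that the rooted tree T^{(u,v)} (obtained by rooting T at v and deleting u and its descendants) is isomorphic to Z, then s(F,T) ≡ 0 (mod m). -/
open SimpleGraph

/-- A subgraph `H` of `G` is a copy of `F` if `H` (as a graph on its vertex set)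
is isomorphic to `F`. -/
def SimpleGraph.Subgraph.IsCopyOf {VG VF : Type*} {G : SimpleGraph VG}
    (H : G.Subgraph) (F : SimpleGraph VF) : Prop :=
  Nonempty (H.coe ≃g F)

/-- An `F`-matching in `G` is a finite set of pairwise vertex-disjoint copies of `F`
in `G`. -/
def IsFMatching {VF VG : Type*} (F : SimpleGraph VF) (G : SimpleGraph VG)
    (M : Finset G.Subgraph) : Prop :=
  (∀ H ∈ M, H.IsCopyOf F) ∧
    (M : Set G.Subgraph).Pairwise fun H K => Disjoint H.verts K.verts

/-- `s(F,G)`: the number of `F`-matchings in `G`. -/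
noncomputable def numFMatchings {VF VG : Type*} (F : SimpleGraph VF)
    (G : SimpleGraph VG) : ℕ :=
  Set.ncard {M : Finset G.Subgraph | IsFMatching F G M}

/-- An induced `F`-matching: an `F`-matching such that no edge of `G` joins two
covered vertices other than the edges of the copies themselves. -/
def IsInducedFMatching {VF VG : Type*} (F : SimpleGraph VF) (G : SimpleGraph VG)
    (M : Finset G.Subgraph) : Prop :=
  IsFMatching F G M ∧
    ∀ a b : VG, G.Adj a b → (∃ H ∈ M, a ∈ H.verts) → (∃ H ∈ M, b ∈ H.verts) →
      ∃ H ∈ M, H.Adj a b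

/-- `s'(F,G)`: the number of induced `F`-matchings in `G`. -/
noncomputable def numInducedFMatchings {VF VG : Type*} (F : SimpleGraph VF)
    (G : SimpleGraph VG) : ℕ :=
  Set.ncard {M : Finset G.Subgraph | IsInducedFMatching F G M}

/-- The nullifying rooted tree `Z` of Lemma 2.2: `D + 1` disjoint copies of `Y`
together with a new root (the vertex `none`), joined by an edge to the vertex
`y₀ i` of the `i`-th copy of `Y`. -/
def nullifyingTree (D : ℕ) {VY : Type*} (Y : SimpleGraph VY)
    (y₀ : Fin (D + 1) → VY) : SimpleGraph (Option (Fin (D + 1) × VY)) :=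
  SimpleGraph.fromRel fun a b =>
    match a, b with
    | some (i, y), some (j, y') => i = j ∧ Y.Adj y y'
    | none, some (i, y) => y = y₀ i
    | _, _ => False

/-! Let `v` be the root of the copy of `Z` and `B₀, …, B_Δ` its blocks, `Δ = Δ(F)`, each a copy
of `Y`. The only edge of `T` leaving `Bᵢ` joins it to `v`, so a copy of `F`, being connected,
either lies in `Bᵢ`, misses `Bᵢ`, or contains `v`; and a copy through `v` meets at most `Δ`
blocks through its edges at `v`, so it misses some block. Choosing for each matching a block
missed by its copy through `v`, every `F`-matching of `T` splits uniquely into the copies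
missing that block and an arbitrary `F`-matching of the block. Hence `s(F,T)` is `s(F,Y)` times
the number of possible outer parts. -/

namespace SimpleGraph

variable {V W : Type*} {G : SimpleGraph V} {G' : SimpleGraph W}

theorem ConnectedComponent.mem_of_adj_of_mem_supp_deleteEdges {s : Set (Sym2 V)}
    {C : (G.deleteEdges s).ConnectedComponent} {x w : V} (hx : x ∈ C.supp) (hw : w ∉ C.supp)
    (hxw : G.Adj x w) : s(x, w) ∈ s := by
  by_contra hs
  have hdel : (G.deleteEdges s).Adj x w := (deleteEdges_adj ..).mpr ⟨hxw, hs⟩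
  exact hw ((C.mem_supp_iff w).mpr <|
    (ConnectedComponent.connectedComponentMk_eq_of_adj hdel).symm.trans hx)

namespace Subgraph

theorem Preconnected.exists_adj_mem_notMem {H : G.Subgraph} (hH : H.Preconnected) {s : Set V}
    {x z : V} (hx : x ∈ H.verts) (hxs : x ∈ s) (hz : z ∈ H.verts) (hzs : z ∉ s) :
    ∃ a b, H.Adj a b ∧ a ∈ s ∧ b ∉ s := by
  obtain ⟨p⟩ := hH ⟨x, hx⟩ ⟨z, hz⟩
  obtain ⟨d, -, hd₁, hd₂⟩ := p.exists_boundary_dart {a | a.1 ∈ s} hxs hzs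
  exact ⟨_, _, d.adj, hd₁, hd₂⟩

section Embedding

variable (φ : G ↪g G')

theorem comap_map_of_embedding (H : G.Subgraph) : (H.map φ.toHom).comap φ.toHom = H := by
  ext a b
  · simp
  · simp only [comap_adj, map_adj, Relation.Map, RelEmbedding.coe_toRelHom, φ.injective.eq_iff,
      exists_eq_right_right, exists_eq_right, and_iff_right_iff_imp]
    exact fun h => H.adj_sub h

theorem map_comap_of_verts_subset_range {H : G'.Subgraph} (hH : H.verts ⊆ Set.range φ) :
    (H.comap φ.toHom).map φ.toHom = H := by
  ext x y
  · refine ⟨fun ⟨a, ha, hax⟩ => hax ▸ ha, fun hx => ?_⟩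
    obtain ⟨a, rfl⟩ := hH hx
    exact ⟨a, hx, rfl⟩
  · refine ⟨fun ⟨a, b, ⟨_, hab⟩, hax, hby⟩ => hax ▸ hby ▸ hab, fun hxy => ?_⟩
    obtain ⟨a, rfl⟩ := hH (H.edge_vert hxy)
    obtain ⟨b, rfl⟩ := hH (H.edge_vert hxy.symm)
    exact ⟨a, b, ⟨φ.map_adj_iff.mp (H.adj_sub hxy), hxy⟩, rfl, rfl⟩

theorem map_injective_of_embedding : Function.Injective (Subgraph.map φ.toHom) :=
  fun H K h => by rw [← comap_map_of_embedding φ H, h, comap_map_of_embedding]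

end Embedding

variable {VF : Type*} {F : SimpleGraph VF} {H : G.Subgraph}

theorem IsCopyOf.verts_nonempty [Nonempty VF] (h : H.IsCopyOf F) : H.verts.Nonempty :=
  let ⟨ψ⟩ := h
  ⟨_, (ψ.symm (Classical.arbitrary VF)).2⟩

theorem IsCopyOf.connected (h : H.IsCopyOf F) (hF : F.Connected) : H.Connected :=
  let ⟨ψ⟩ := h
  Subgraph.connected_iff'.mpr (ψ.connected_iff.mpr hF)

theorem IsCopyOf.encard_neighborSet_le [Fintype VF] [DecidableRel F.Adj] (h : H.IsCopyOf F)
    (x : V) : (H.neighborSet x).encard ≤ F.maxDegree := by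
  by_cases hx : x ∈ H.verts
  · obtain ⟨ψ⟩ := h
    calc (H.neighborSet x).encard = (F.neighborSet (ψ ⟨x, hx⟩)).encard :=
          Set.encard_congr ((H.coeNeighborSetEquiv ⟨x, hx⟩).symm.trans (ψ.mapNeighborSet _))
      _ = F.degree (ψ ⟨x, hx⟩) := by
          rw [Set.encard_eq_coe_toFinset_card, ← card_neighborFinset_eq_degree, neighborFinset_def]
      _ ≤ F.maxDegree := by exact_mod_cast F.degree_le_maxDegree _
  · have : H.neighborSet x = ∅ := Set.eq_empty_of_forall_notMem fun _ hw => hx (H.edge_vert hw)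
    simp [this]

theorem isCopyOf_map_iff (φ : G ↪g G') : (H.map φ.toHom).IsCopyOf F ↔ H.IsCopyOf F :=
  let e := φ.toCopy.isoSubgraphMap H
  ⟨fun ⟨ψ⟩ => ⟨e.trans ψ⟩, fun ⟨ψ⟩ => ⟨e.symm.trans ψ⟩⟩

end Subgraph

def Embedding.IsPendantAt (ψ : G ↪g G') (r : V) : Prop :=
  ∀ z w, G'.Adj (ψ z) w → w ∉ Set.range ψ → z = r

theorem Embedding.IsPendantAt.comp_iso {U : Type*} {G'' : SimpleGraph U} {ψ : G ↪g G'} {r : V}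
    (hψ : ψ.IsPendantAt r) (e : G ≃g G'') : (ψ.comp e.symm.toEmbedding).IsPendantAt (e r) := by
  intro z w hzw hw
  rw [← e.symm_apply_eq]
  exact hψ (e.symm z) w hzw fun ⟨x, hx⟩ => hw ⟨e x, by simp [hx]⟩

theorem isPendantAt_induce_supp_deleteEdges (u v : V) :
    (Embedding.induce (G := G) ((G.deleteEdges {s(u, v)}).connectedComponentMk v).supp)
      |>.IsPendantAt ⟨v, rfl⟩ := by
  rintro ⟨x, hx⟩ w hxw hw
  have hwC : w ∉ ((G.deleteEdges {s(u, v)}).connectedComponentMk v).supp :=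
    fun hwC => hw (Set.mem_range.mpr ⟨⟨w, hwC⟩, rfl⟩)
  have hedge : s(x, w) ∈ ({s(u, v)} : Set (Sym2 V)) :=
    ConnectedComponent.mem_of_adj_of_mem_supp_deleteEdges hx hwC hxw
  rcases Sym2.eq_iff.mp (Set.mem_singleton_iff.mp hedge) with ⟨-, hwv⟩ | ⟨hxv, -⟩
  · exact absurd (hwv ▸ rfl) hwC
  · exact Subtype.ext hxv

end SimpleGraph

namespace IsFMatching

variable {VF V W : Type*} {F : SimpleGraph VF} {G : SimpleGraph V} {G' : SimpleGraph W}
  {M N : Finset G.Subgraph}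

theorem mono (hM : IsFMatching F G M) (h : N ⊆ M) : IsFMatching F G N :=
  ⟨fun H hH => hM.1 H (h hH), hM.2.mono (by exact_mod_cast h)⟩

open Classical in
theorem union (hM : IsFMatching F G M) (hN : IsFMatching F G N)
    (h : ∀ H ∈ M, ∀ K ∈ N, Disjoint H.verts K.verts) : IsFMatching F G (M ∪ N) := by
  refine ⟨fun H hH => (Finset.mem_union.mp hH).elim (hM.1 H) (hN.1 H), ?_⟩
  rw [Finset.coe_union, Set.pairwise_union]
  exact ⟨hM.2, hN.2, fun H hH K hK _ => ⟨h H hH K hK, (h H hH K hK).symm⟩⟩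

theorem eq_of_mem_verts (hM : IsFMatching F G M) {H K : G.Subgraph} (hH : H ∈ M) (hK : K ∈ M)
    {x : V} (hxH : x ∈ H.verts) (hxK : x ∈ K.verts) : H = K :=
  by_contra fun hne => Set.disjoint_left.mp (hM.2 hH hK hne) hxH hxK

theorem map_iff (φ : G ↪g G') :
    IsFMatching F G' (M.map ⟨_, Subgraph.map_injective_of_embedding φ⟩) ↔ IsFMatching F G M := by
  simp only [IsFMatching, Finset.forall_mem_map, Function.Embedding.coeFn_mk,
    Subgraph.isCopyOf_map_iff, Finset.coe_map,
    (Subgraph.map_injective_of_embedding φ).injOn.pairwise_image]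
  have hdisj : Function.onFun (fun H K : G'.Subgraph => Disjoint H.verts K.verts)
      (Subgraph.map φ.toHom) =
      fun H K : G.Subgraph => Disjoint H.verts K.verts := by
    ext H K
    exact Set.disjoint_image_iff φ.injective
  rw [hdisj]

end IsFMatching

section Transfer

variable {VF V W : Type*} {F : SimpleGraph VF} {G : SimpleGraph V} {G' : SimpleGraph W}

theorem numFMatchings_eq_natCard (F : SimpleGraph VF) (G : SimpleGraph V) :
    numFMatchings F G = Nat.card {M // IsFMatching F G M} :=
  (Nat.card_coe_set_eq _).symm

noncomputable def fMatchingsEquivOfEmbedding (φ : G ↪g G') :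
    {N // IsFMatching F G N} ≃ {M // IsFMatching F G' M ∧ ∀ H ∈ M, H.verts ⊆ Set.range φ} :=
  Equiv.ofBijective
    (fun N => ⟨N.1.map ⟨_, Subgraph.map_injective_of_embedding φ⟩,
      (IsFMatching.map_iff φ).mpr N.2, by simp⟩)
    ⟨fun N N' h => Subtype.ext (Finset.map_injective _ (congrArg Subtype.val h)), fun M => by
      classical
      obtain ⟨M, hM, hMφ⟩ := M
      have hmap : (M.image (Subgraph.comap φ.toHom)).map
          ⟨_, Subgraph.map_injective_of_embedding φ⟩ = M := by
        rw [Finset.map_eq_image, Finset.image_image]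
        exact (Finset.image_congr fun H hH =>
          Subgraph.map_comap_of_verts_subset_range φ (hMφ H hH)).trans Finset.image_id
      refine ⟨⟨M.image (Subgraph.comap φ.toHom), ?_⟩, Subtype.ext hmap⟩
      rwa [← IsFMatching.map_iff φ, hmap]⟩

end Transfer

section FreeBlock

open Classical

variable {VF VY VT ι : Type*} {F : SimpleGraph VF} {Y : SimpleGraph VY} {T : SimpleGraph VT}
  [Nonempty ι] (φ : ι → Y ↪g T) (v : VT)

/- Only the copies in `M` through `v` matter here, so adding or removing copies that avoid `v`
does not change the chosen block (`freeBlock_congr`). -/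
noncomputable def freeBlock (M : Finset T.Subgraph) : ι :=
  Classical.epsilon fun i => ∀ H ∈ M, v ∈ H.verts → Disjoint (Set.range (φ i)) H.verts

noncomputable def outerPart (M : Finset T.Subgraph) : Finset T.Subgraph :=
  M.filter fun H => Disjoint (Set.range (φ (freeBlock φ v M))) H.verts

variable (F) in
def IsOuterFMatching (A : Finset T.Subgraph) : Prop :=
  IsFMatching F T A ∧ ∀ H ∈ A, Disjoint (Set.range (φ (freeBlock φ v A))) H.verts

variable {φ v} {M A N : Finset T.Subgraph}

theorem freeBlock_congr (h : ∀ H, v ∈ H.verts → (H ∈ M ↔ H ∈ N)) :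
    freeBlock φ v M = freeBlock φ v N := by
  have hpred : (fun i => ∀ H ∈ M, v ∈ H.verts → Disjoint (Set.range (φ i)) H.verts) =
      fun i => ∀ H ∈ N, v ∈ H.verts → Disjoint (Set.range (φ i)) H.verts := by
    funext i
    exact propext ⟨fun hi H hH hv => hi H ((h H hv).mpr hH) hv,
      fun hi H hH hv => hi H ((h H hv).mp hH) hv⟩
  simp only [freeBlock, hpred]

theorem disjoint_freeBlock
    (hcov : ∀ H : T.Subgraph, H.IsCopyOf F → v ∈ H.verts →
      ∃ i, Disjoint (Set.range (φ i)) H.verts)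
    (hM : IsFMatching F T M) {H : T.Subgraph} (hH : H ∈ M) (hv : v ∈ H.verts) :
    Disjoint (Set.range (φ (freeBlock φ v M))) H.verts := by
  obtain ⟨i, hi⟩ := hcov H (hM.1 H hH) hv
  refine Classical.epsilon_spec
    (p := fun i => ∀ K ∈ M, v ∈ K.verts → Disjoint (Set.range (φ i)) K.verts)
    ⟨i, fun K hK hvK => ?_⟩ H hH hv
  rwa [hM.eq_of_mem_verts hK hH hvK hv]

theorem freeBlock_outerPart
    (hcov : ∀ H : T.Subgraph, H.IsCopyOf F → v ∈ H.verts →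
      ∃ i, Disjoint (Set.range (φ i)) H.verts)
    (hM : IsFMatching F T M) : freeBlock φ v (outerPart φ v M) = freeBlock φ v M :=
  freeBlock_congr fun _ hv => ⟨fun h => (Finset.mem_filter.mp h).1,
    fun h => Finset.mem_filter.mpr ⟨h, disjoint_freeBlock hcov hM h hv⟩⟩

theorem IsFMatching.isOuterFMatching_outerPart
    (hcov : ∀ H : T.Subgraph, H.IsCopyOf F → v ∈ H.verts →
      ∃ i, Disjoint (Set.range (φ i)) H.verts)
    (hM : IsFMatching F T M) : IsOuterFMatching F φ v (outerPart φ v M) :=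
  ⟨hM.mono (Finset.filter_subset _ _),
    fun _ hH => freeBlock_outerPart hcov hM ▸ (Finset.mem_filter.mp hH).2⟩

theorem verts_subset_of_mem_sdiff_outerPart
    (hcov : ∀ H : T.Subgraph, H.IsCopyOf F → v ∈ H.verts →
      ∃ i, Disjoint (Set.range (φ i)) H.verts)
    (hsplit : ∀ H : T.Subgraph, H.IsCopyOf F → v ∉ H.verts →
      ∀ i, Disjoint (Set.range (φ i)) H.verts ∨ H.verts ⊆ Set.range (φ i))
    (hM : IsFMatching F T M) {H : T.Subgraph} (hH : H ∈ M \ outerPart φ v M) :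
    H.verts ⊆ Set.range (φ (freeBlock φ v (outerPart φ v M))) := by
  rw [freeBlock_outerPart hcov hM]
  obtain ⟨hHM, hHout⟩ := Finset.mem_sdiff.mp hH
  have hmeets : ¬Disjoint (Set.range (φ (freeBlock φ v M))) H.verts :=
    fun hd => hHout (Finset.mem_filter.mpr ⟨hHM, hd⟩)
  have hvH : v ∉ H.verts := fun hv => hmeets (disjoint_freeBlock hcov hM hHM hv)
  exact (hsplit H (hM.1 H hHM) hvH _).resolve_left hmeets

namespace IsOuterFMatching

theorem union (hA : IsOuterFMatching F φ v A) (hN : IsFMatching F T N)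
    (hNA : ∀ H ∈ N, H.verts ⊆ Set.range (φ (freeBlock φ v A))) : IsFMatching F T (A ∪ N) :=
  hA.1.union hN fun H hH K hK => (hA.2 H hH).symm.mono_right (hNA K hK)

theorem disjoint [Nonempty VF] (hA : IsOuterFMatching F φ v A) (hN : IsFMatching F T N)
    (hNA : ∀ H ∈ N, H.verts ⊆ Set.range (φ (freeBlock φ v A))) : Disjoint A N :=
  Finset.disjoint_left.mpr fun H hHA hHN =>
    (hN.1 H hHN).verts_nonempty.ne_empty ((hA.2 H hHA).eq_bot_of_ge (hNA H hHN))

theorem outerPart_union [Nonempty VF] (hv : ∀ i, v ∉ Set.range (φ i))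
    (hA : IsOuterFMatching F φ v A) (hN : IsFMatching F T N)
    (hNA : ∀ H ∈ N, H.verts ⊆ Set.range (φ (freeBlock φ v A))) : outerPart φ v (A ∪ N) = A := by
  have hfree : freeBlock φ v (A ∪ N) = freeBlock φ v A :=
    freeBlock_congr fun H hvH => ⟨fun h => (Finset.mem_union.mp h).resolve_right
      fun hHN => hv _ (hNA H hHN hvH), Finset.mem_union_left _⟩
  ext H
  simp only [outerPart, hfree, Finset.mem_filter, Finset.mem_union]
  constructor
  · rintro ⟨hH | hH, hd⟩
    · exact hH
    · exact absurd (hd.eq_bot_of_ge (hNA H hH)) (hN.1 H hH).verts_nonempty.ne_empty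
  · exact fun hH => ⟨Or.inl hH, hA.2 H hH⟩

end IsOuterFMatching

noncomputable def fMatchingsEquivSigma [Nonempty VF] (hv : ∀ i, v ∉ Set.range (φ i))
    (hcov : ∀ H : T.Subgraph, H.IsCopyOf F → v ∈ H.verts →
      ∃ i, Disjoint (Set.range (φ i)) H.verts)
    (hsplit : ∀ H : T.Subgraph, H.IsCopyOf F → v ∉ H.verts →
      ∀ i, Disjoint (Set.range (φ i)) H.verts ∨ H.verts ⊆ Set.range (φ i)) :
    {M // IsFMatching F T M} ≃ Σ A : {A // IsOuterFMatching F φ v A},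
      {N // IsFMatching F T N ∧ ∀ H ∈ N, H.verts ⊆ Set.range (φ (freeBlock φ v A.1))} where
  toFun M := ⟨⟨outerPart φ v M.1, M.2.isOuterFMatching_outerPart hcov⟩,
    ⟨M.1 \ outerPart φ v M.1, M.2.mono Finset.sdiff_subset,
      fun _ hH => verts_subset_of_mem_sdiff_outerPart hcov hsplit M.2 hH⟩⟩
  invFun p := ⟨p.1.1 ∪ p.2.1, p.1.2.union p.2.2.1 p.2.2.2⟩
  left_inv M := Subtype.ext (Finset.union_sdiff_of_subset (Finset.filter_subset _ _))
  right_inv p := by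
    have hout := p.1.2.outerPart_union hv p.2.2.1 p.2.2.2
    refine Sigma.subtype_ext (Subtype.ext hout) ?_
    simp only [hout]
    exact Finset.union_sdiff_cancel_left (p.1.2.disjoint p.2.2.1 p.2.2.2)

theorem numFMatchings_dvd_of_blocks [Nonempty VF] (hv : ∀ i, v ∉ Set.range (φ i))
    (hcov : ∀ H : T.Subgraph, H.IsCopyOf F → v ∈ H.verts →
      ∃ i, Disjoint (Set.range (φ i)) H.verts)
    (hsplit : ∀ H : T.Subgraph, H.IsCopyOf F → v ∉ H.verts →
      ∀ i, Disjoint (Set.range (φ i)) H.verts ∨ H.verts ⊆ Set.range (φ i)) :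
    numFMatchings F Y ∣ numFMatchings F T := by
  let e := (fMatchingsEquivSigma hv hcov hsplit).trans <|
    (Equiv.sigmaCongrRight fun A : {A // IsOuterFMatching F φ v A} =>
      (fMatchingsEquivOfEmbedding (φ (freeBlock φ v A.1))).symm).trans (Equiv.sigmaEquivProd _ _)
  rw [numFMatchings_eq_natCard F T, Nat.card_congr e, Nat.card_prod, ← numFMatchings_eq_natCard]
  exact dvd_mul_left _ _

end FreeBlock

section NullifyingTree

variable {D : ℕ} {VY VT : Type*} {Y : SimpleGraph VY} {y₀ : Fin (D + 1) → VY}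
  {T : SimpleGraph VT}

theorem nullifyingTree_adj_some_some {i j : Fin (D + 1)} {a b : VY} :
    (nullifyingTree D Y y₀).Adj (some (i, a)) (some (j, b)) ↔ i = j ∧ Y.Adj a b := by
  rw [nullifyingTree, fromRel_adj]
  constructor
  · rintro ⟨-, h | ⟨rfl, h⟩⟩
    exacts [h, ⟨rfl, h.symm⟩]
  · rintro ⟨rfl, h⟩
    exact ⟨by simp [h.ne], Or.inl ⟨rfl, h⟩⟩

theorem nullifyingTree_adj_none_some {i : Fin (D + 1)} {y : VY} :
    (nullifyingTree D Y y₀).Adj none (some (i, y)) ↔ y = y₀ i := by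
  rw [nullifyingTree, fromRel_adj]
  simp

def nullifyingTree.block (i : Fin (D + 1)) : Y ↪g nullifyingTree D Y y₀ where
  toFun y := some (i, y)
  inj' := (Option.some_injective _).comp (Prod.mk_right_injective i)
  map_rel_iff' := by simp [nullifyingTree_adj_some_some]

theorem nullifyingTree.eq_none_of_adj_block {i : Fin (D + 1)} {y : VY} {z}
    (h : (nullifyingTree D Y y₀).Adj (some (i, y)) z) (hz : ∀ b, z ≠ some (i, b)) :
    z = none ∧ y = y₀ i := by
  match z with
  | none => exact ⟨rfl, nullifyingTree_adj_none_some.mp h.symm⟩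
  | some (j, b) =>
    obtain ⟨rfl, -⟩ := nullifyingTree_adj_some_some.mp h
    exact absurd rfl (hz b)

variable {ψ : nullifyingTree D Y y₀ ↪g T}

theorem apply_none_notMem_range_comp_block (i : Fin (D + 1)) :
    ψ none ∉ Set.range (ψ.comp (nullifyingTree.block i)) :=
  fun ⟨_, hy⟩ => Option.some_ne_none _ (ψ.injective hy)

theorem eq_root_of_adj_of_notMem_range_block (hψ : ψ.IsPendantAt none)
    {i : Fin (D + 1)} {y : VY} {w : VT} (h : T.Adj (ψ (some (i, y))) w)
    (hw : w ∉ Set.range (ψ.comp (nullifyingTree.block i))) : y = y₀ i ∧ w = ψ none := by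
  by_cases hwψ : w ∈ Set.range ψ
  · obtain ⟨z, rfl⟩ := hwψ
    obtain ⟨rfl, hy⟩ := nullifyingTree.eq_none_of_adj_block (ψ.map_adj_iff.mp h)
      fun b hb => hw ⟨b, by rw [hb]; rfl⟩
    exact ⟨hy, rfl⟩
  · exact absurd (hψ _ w h hwψ) (Option.some_ne_none _)

theorem SimpleGraph.Subgraph.Preconnected.adj_of_crosses_block
    (hψ : ψ.IsPendantAt none) {H : T.Subgraph}
    (hH : H.Preconnected) {i : Fin (D + 1)} {x z : VT} (hx : x ∈ H.verts)
    (hxi : x ∈ Set.range (ψ.comp (nullifyingTree.block i))) (hz : z ∈ H.verts)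
    (hzi : z ∉ Set.range (ψ.comp (nullifyingTree.block i))) :
    H.Adj (ψ (some (i, y₀ i))) (ψ none) := by
  obtain ⟨a, b, hab, ⟨y, rfl⟩, hb⟩ := hH.exists_adj_mem_notMem hx hxi hz hzi
  obtain ⟨rfl, rfl⟩ := eq_root_of_adj_of_notMem_range_block hψ (H.adj_sub hab) hb
  exact hab

end NullifyingTree

section CopiesThroughNullifyingTree

variable {VF VY VT : Type*} [Fintype VF] {F : SimpleGraph VF} [DecidableRel F.Adj]
  {Y : SimpleGraph VY} {y₀ : Fin (F.maxDegree + 1) → VY} {T : SimpleGraph VT}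
  {ψ : nullifyingTree F.maxDegree Y y₀ ↪g T}

theorem SimpleGraph.Subgraph.IsCopyOf.exists_disjoint_block (hF : F.Connected)
    (hψ : ψ.IsPendantAt none) {H : T.Subgraph}
    (hH : H.IsCopyOf F) (hv : ψ none ∈ H.verts) :
    ∃ i, Disjoint (Set.range (ψ.comp (nullifyingTree.block i))) H.verts := by
  by_contra! hmeet
  have hadj : ∀ i, H.Adj (ψ none) (ψ (some (i, y₀ i))) := fun i => by
    obtain ⟨x, hxi, hxH⟩ := Set.not_disjoint_iff.mp (hmeet i)
    exact ((hH.connected hF).preconnected.adj_of_crosses_block hψ hxH hxi hv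
      (apply_none_notMem_range_comp_block i)).symm
  have hinj : Function.Injective fun i => ψ (some (i, y₀ i)) :=
    fun _ _ h => congrArg Prod.fst (Option.some.inj (ψ.injective h))
  have hcard := hinj.encard_range.trans <|
    (Set.encard_le_encard (Set.range_subset_iff.mpr hadj)).trans (hH.encard_neighborSet_le _)
  simp only [ENat.card_eq_coe_fintype_card, Fintype.card_fin] at hcard
  exact absurd hcard (by norm_cast; omega)

theorem SimpleGraph.Subgraph.IsCopyOf.disjoint_or_subset_block (hF : F.Connected)
    (hψ : ψ.IsPendantAt none) {H : T.Subgraph}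
    (hH : H.IsCopyOf F) (hv : ψ none ∉ H.verts) (i : Fin (F.maxDegree + 1)) :
    Disjoint (Set.range (ψ.comp (nullifyingTree.block i))) H.verts ∨
      H.verts ⊆ Set.range (ψ.comp (nullifyingTree.block i)) := by
  by_contra! h
  obtain ⟨x, hxi, hxH⟩ := Set.not_disjoint_iff.mp h.1
  obtain ⟨z, hzH, hzi⟩ := Set.not_subset.mp h.2
  exact hv (H.edge_vert ((hH.connected hF).preconnected.adj_of_crosses_block hψ hxH hxi hzH
    hzi).symm)

variable (ψ) in
theorem numFMatchings_dvd_of_nullifyingTree_embedding (hF : F.Connected)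
    (hψ : ψ.IsPendantAt none) :
    numFMatchings F Y ∣ numFMatchings F T :=
  haveI := hF.nonempty
  numFMatchings_dvd_of_blocks apply_none_notMem_range_comp_block
    (fun _ hH hv => hH.exists_disjoint_block hF hψ hv)
    (fun _ hH hv => hH.disjoint_or_subset_block hF hψ hv)

end CopiesThroughNullifyingTree

theorem dvd_numFMatchings_of_nullifying_leaf_general
    {VF VY VT : Type*} [Fintype VF]
    (F : SimpleGraph VF) [DecidableRel F.Adj]
    (hF : F.IsTree)
    (m : ℕ)
    (Y : SimpleGraph VY) (hYm : m ∣ numFMatchings F Y)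
    (y₀ : Fin (F.maxDegree + 1) → VY)
    (T : SimpleGraph VT) (u v : VT)
    (e : SimpleGraph.induce (((T.deleteEdges {s(u, v)}).connectedComponentMk v).supp) T
        ≃g nullifyingTree F.maxDegree Y y₀)
    (he : e ⟨v, rfl⟩ = none) :
    m ∣ numFMatchings F T := by
  have hψ := (isPendantAt_induce_supp_deleteEdges (G := T) u v).comp_iso e
  rw [he] at hψ
  exact hYm.trans (numFMatchings_dvd_of_nullifyingTree_embedding _ hF.connected hψ)

/-- Lemma 2.2 of the paper: let `F` be a tree with at least one edge, `m > 0`,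
and `Y` a tree with `m ∣ s(F,Y)`.  If a tree `T` has an edge `{u,v}` such that
`T^{(u,v)}` — the component of `v` in `T` minus the edge `{u,v}`, rooted at
`v` — is isomorphic (as a rooted tree) to the nullifying tree `Z` built from
`Δ(F) + 1` copies of `Y`, then `m ∣ s(F,T)`. -/
theorem dvd_numFMatchings_of_nullifying_leaf
    {VF VY VT : Type*} [Fintype VF] [Fintype VY] [Fintype VT]
    (F : SimpleGraph VF) [DecidableRel F.Adj]
    (hF : F.IsTree) (hFe : F.edgeSet.Nonempty)
    (m : ℕ) (hm : 0 < m)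
    (Y : SimpleGraph VY) (hY : Y.IsTree) (hYm : m ∣ numFMatchings F Y)
    (y₀ : Fin (F.maxDegree + 1) → VY)
    (T : SimpleGraph VT) (hT : T.IsTree) (u v : VT) (huv : T.Adj u v)
    (e : SimpleGraph.induce (((T.deleteEdges {s(u, v)}).connectedComponentMk v).supp) T
        ≃g nullifyingTree F.maxDegree Y y₀)
    (he : e ⟨v, rfl⟩ = none) :
    m ∣ numFMatchings F T :=
  dvd_numFMatchings_of_nullifying_leaf_general F hF m Y hYm y₀ T u v e he
end
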